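/- Let F be holomorphic on an open neighbourhood of 0 in ℂ with F(0) = 0, F'(0) ≠ 0, |F'(0)| ≠ 1, F''(0) = 0, and F'' not identically zero on any neighbourhood of 0. Then for every δ > 0 there exist points z₊ and z₋ with 0 < |z₊| < δ, 0 < |z₋| < δ, F(z₊) ≠ 0, F(z₋) ≠ 0, such that K(z₊) > 0 and K(z₋) < 0; that is, every punctured neighbourhood of 0 contains both points of positive and points of negative Gaussian curvature. -/

import Mathlib

/-- Gaussian curvature of the modular surface `(x, y, |F(x+iy)|)` in Lorentz-Minkowski
3-space, at a point where `F ≠ 0` and `|F'| ≠ 1`: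
`K = -(|F'|⁴ - |2FF'' - F'²|²)/(4|F|²(1-|F'|²)²)`. -/
noncomputable def gaussK (F : ℂ → ℂ) (z : ℂ) : ℝ :=
  -((norm (deriv F z)) ^ 4 -
      (norm (2 * F z * deriv (deriv F) z - (deriv F z) ^ 2)) ^ 2) /
    (4 * (norm (F z)) ^ 2 * (1 - (norm (deriv F z)) ^ 2) ^ 2)

/-- If `F(0) = 0`, `F'(0) ≠ 0`, `|F'(0)| ≠ 1`, `F''(0) = 0` and `F''` is not
identically zero on any neighbourhood of `0`, then every punctured neighbourhood of `0`
contains points (where `F ≠ 0`) of positive and of negative Gaussian curvature. -/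
theorem sign_gaussK_of_F_zero_F''_vanishing
    (U : Set ℂ) (hU : IsOpen U) (h0U : (0 : ℂ) ∈ U)
    (F : ℂ → ℂ) (hF : DifferentiableOn ℂ F U)
    (hF0 : F 0 = 0) (hF'0 : deriv F 0 ≠ 0)
    (hF'abs : norm (deriv F 0) ≠ 1)
    (hF''0 : deriv (deriv F) 0 = 0)
    (hF''ne : ∀ V ∈ nhds (0 : ℂ), ∃ z ∈ V, deriv (deriv F) z ≠ 0) :
    ∀ δ > (0 : ℝ), ∃ zp zm : ℂ,
      0 < norm zp ∧ norm zp < δ ∧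
      0 < norm zm ∧ norm zm < δ ∧
      F zp ≠ 0 ∧ F zm ≠ 0 ∧
      0 < gaussK F zp ∧ gaussK F zm < 0 := by
  intro δ hδ
  have hFa : AnalyticOnNhd ℂ F U := hF.analyticOnNhd hU
  have hF'a : AnalyticOnNhd ℂ (deriv F) U := hFa.deriv
  have hF''a : AnalyticOnNhd ℂ (deriv (deriv F)) U := hF'a.deriv
  set φ : ℂ → ℂ := fun z => 2 * F z * deriv (deriv F) z - (deriv F z) ^ 2 with hφdef
  set ψ : ℂ → ℂ := fun z => (deriv F z) ^ 2 with hψdef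
  set h : ℂ → ℂ := fun z => φ z / ψ z with hhdef
  have hφa : AnalyticAt ℂ φ 0 :=
    ((analyticAt_const.mul (hFa 0 h0U)).mul (hF''a 0 h0U)).sub ((hF'a 0 h0U).pow 2)
  have hψ0 : ψ 0 ≠ 0 := pow_ne_zero 2 hF'0
  have hha : AnalyticAt ℂ h 0 := hφa.div ((hF'a 0 h0U).pow 2) hψ0
  have hh0 : h 0 = -1 := by
    simp only [hhdef, hφdef, hψdef, hF0, hF''0, mul_zero, zero_sub, neg_div]
    rw [div_self (pow_ne_zero 2 hF'0)]
  -- F is nonzero on a punctured neighbourhood of 0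
  have hFne : ∀ᶠ z in nhdsWithin (0:ℂ) {0}ᶜ, F z ≠ 0 := by
    rcases (hFa 0 h0U).eventually_eq_zero_or_eventually_ne_zero with h1 | h1
    · exfalso
      apply hF'0
      have h2 : F =ᶠ[nhds (0:ℂ)] (fun _ => (0:ℂ)) := h1
      rw [h2.deriv_eq]
      simp
    · exact h1
  -- sign of gaussK in terms of |h|
  have key : ∀ z : ℂ, deriv F z ≠ 0 → F z ≠ 0 → norm (deriv F z) ≠ 1 →
      ((1 < norm (h z) → 0 < gaussK F z) ∧
       (norm (h z) < 1 → gaussK F z < 0)) := by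
    intro z hd hFz habs
    set a := norm (deriv F z) with ha
    have ha0 : 0 < a := norm_pos_iff.mpr hd
    have hψz : ψ z ≠ 0 := pow_ne_zero 2 hd
    have hφh : φ z = h z * ψ z := by
      rw [hhdef]
      field_simp
    have hb : norm (φ z) = norm (h z) * a ^ 2 := by
      rw [hφh, norm_mul, hψdef]
      simp [map_pow, ha]
    have hD : 0 < 4 * (norm (F z)) ^ 2 * (1 - a ^ 2) ^ 2 := by
      have h1 : 0 < norm (F z) := norm_pos_iff.mpr hFz
      have h2 : (1 : ℝ) - a ^ 2 ≠ 0 := by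
        intro hc
        apply habs
        nlinarith [norm_nonneg (deriv F z)]
      positivity
    have hnum : -(a ^ 4 - (norm (φ z)) ^ 2) = a ^ 4 * ((norm (h z)) ^ 2 - 1) := by
      rw [hb]; ring
    have hgk : gaussK F z =
        (a ^ 4 * ((norm (h z)) ^ 2 - 1)) / (4 * (norm (F z)) ^ 2 * (1 - a ^ 2) ^ 2) := by
      rw [gaussK, ← hnum]
    have ha4 : 0 < a ^ 4 := pow_pos ha0 4
    have hhz0 : 0 ≤ norm (h z) := norm_nonneg _
    constructor
    · intro hgt
      rw [hgk]
      exact div_pos (mul_pos ha4 (by nlinarith)) hD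
    · intro hlt
      rw [hgk]
      exact div_neg_of_neg_of_pos (mul_neg_of_pos_of_neg ha4 (by nlinarith)) hD
  rcases hha.eventually_constant_or_nhds_le_map_nhds with hc | hopen
  · -- constant case: contradiction
    exfalso
    have hd : ∀ᶠ z in nhds (0:ℂ), deriv F z ≠ 0 :=
      (hF'a 0 h0U).continuousAt.eventually_ne hF'0
    have hmul : ∀ᶠ z in nhds (0:ℂ), F z * deriv (deriv F) z = 0 := by
      filter_upwards [hc, hd] with z h1 h2
      rw [hh0] at h1
      have hψz : ψ z ≠ 0 := pow_ne_zero 2 h2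
      have hφz : φ z = -ψ z := by
        rw [hhdef] at h1
        field_simp at h1
        linear_combination h1
      have : 2 * F z * deriv (deriv F) z = 0 := by
        have := hφz
        rw [hφdef, hψdef] at this
        linear_combination this
      have h2' : (2:ℂ) ≠ 0 := two_ne_zero
      rcases mul_eq_zero.mp this with h | h
      · rcases mul_eq_zero.mp h with h | h
        · exact absurd h h2'
        · rw [h, zero_mul]
      · rw [h, mul_zero]
    have hFF : ∀ᶠ z in nhds (0:ℂ), deriv (deriv F) z = 0 := by
      have h1 := eventually_nhdsWithin_iff.mp hFne
      filter_upwards [h1, hmul] with z hz1 hz2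
      by_cases hz0 : z = 0
      · rw [hz0]; exact hF''0
      · rcases mul_eq_zero.mp hz2 with h | h
        · exact absurd h (hz1 hz0)
        · exact h
    obtain ⟨z, hz1, hz2⟩ := hF''ne _ hFF
    exact hz2 hz1
  · -- open case
    have hd : ∀ᶠ z in nhds (0:ℂ), deriv F z ≠ 0 :=
      (hF'a 0 h0U).continuousAt.eventually_ne hF'0
    have habs : ∀ᶠ z in nhds (0:ℂ), norm (deriv F z) ≠ 1 := by
      have hc : ContinuousAt (fun z => norm (deriv F z)) 0 :=
        continuous_norm.continuousAt.comp (hF'a 0 h0U).continuousAt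
      exact hc.eventually_ne hF'abs
    have hδ' : ∀ᶠ z in nhds (0:ℂ), norm z < δ := by
      have : Metric.ball (0:ℂ) δ ∈ nhds (0:ℂ) := Metric.ball_mem_nhds 0 hδ
      filter_upwards [this] with z hz
      rw [mem_ball_zero_iff] at hz
      simpa using hz
    have hF0' : ∀ᶠ z in nhds (0:ℂ), z ≠ 0 → F z ≠ 0 := eventually_nhdsWithin_iff.mp hFne
    have hVmem : {z : ℂ | deriv F z ≠ 0 ∧ norm (deriv F z) ≠ 1 ∧
        norm z < δ ∧ (z ≠ 0 → F z ≠ 0)} ∈ nhds (0:ℂ) := by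
      filter_upwards [hd, habs, hδ', hF0'] with z h1 h2 h3 h4
      exact ⟨h1, h2, h3, h4⟩
    set V := {z : ℂ | deriv F z ≠ 0 ∧ norm (deriv F z) ≠ 1 ∧
        norm z < δ ∧ (z ≠ 0 → F z ≠ 0)} with hVdef
    have himg : h '' V ∈ nhds (h 0) := hopen (Filter.image_mem_map hVmem)
    rw [hh0] at himg
    obtain ⟨ε, hε, hball⟩ := Metric.mem_nhds_iff.mp himg
    set ε' := min ε 1 with hε'def
    have hε'0 : 0 < ε' := lt_min hε one_pos
    have hε'1 : ε' ≤ 1 := min_le_right _ _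
    have hε'ε : ε' ≤ ε := min_le_left _ _
    -- the two target values
    set wp : ℂ := ((-(1 + ε'/2) : ℝ) : ℂ) with hwp
    set wm : ℂ := ((-(1 - ε'/2) : ℝ) : ℂ) with hwm
    have hwpmem : wp ∈ Metric.ball (-1 : ℂ) ε := by
      rw [Metric.mem_ball, dist_eq_norm]
      have : wp - (-1) = ((-(ε'/2) : ℝ) : ℂ) := by
        rw [hwp]; push_cast; ring
      rw [this, Complex.norm_real, Real.norm_eq_abs, abs_of_nonpos (by linarith)]
      linarith
    have hwmmem : wm ∈ Metric.ball (-1 : ℂ) ε := by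
      rw [Metric.mem_ball, dist_eq_norm]
      have : wm - (-1) = ((ε'/2 : ℝ) : ℂ) := by
        rw [hwm]; push_cast; ring
      rw [this, Complex.norm_real, Real.norm_eq_abs, abs_of_nonneg (by linarith)]
      linarith
    have hwpabs : 1 < norm wp := by
      rw [hwp, Complex.norm_real, Real.norm_eq_abs, abs_of_nonpos (by linarith)]
      linarith
    have hwmabs : norm wm < 1 := by
      rw [hwm, Complex.norm_real, Real.norm_eq_abs, abs_of_nonpos (by linarith)]
      linarith
    obtain ⟨zp, hzpV, hzp⟩ := hball hwpmem
    obtain ⟨zm, hzmV, hzm⟩ := hball hwmmem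
    obtain ⟨hzp1, hzp2, hzp3, hzp4⟩ := hzpV
    obtain ⟨hzm1, hzm2, hzm3, hzm4⟩ := hzmV
    have hzp0 : zp ≠ 0 := by
      intro hc
      rw [hc, hh0] at hzp
      rw [← hzp] at hwpabs
      simp at hwpabs
    have hzm0 : zm ≠ 0 := by
      intro hc
      rw [hc, hh0] at hzm
      rw [← hzm] at hwmabs
      simp at hwmabs
    have hFzp : F zp ≠ 0 := hzp4 hzp0
    have hFzm : F zm ≠ 0 := hzm4 hzm0
    refine ⟨zp, zm, norm_pos_iff.mpr hzp0, hzp3, norm_pos_iff.mpr hzm0, hzm3, hFzp, hFzm, ?_, ?_⟩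
    · exact (key zp hzp1 hFzp hzp2).1 (by rw [hzp]; exact hwpabs)
    · exact (key zm hzm1 hFzm hzm2).2 (by rw [hzm]; exact hwmabs)
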